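/- Let C be a chain complex over ℤ with underlying graded module ⊕_s A_s ⊕ ⊕_s B_s, B_s ≅ ℤ in homology, differential given by maps v_s : A_s → B_s and h_s : A_s → B_{s+r} with r > 0, where every v_s and h_s appearing is surjective on homology and the h-maps vanish for s > -t with t = τ ≤ 0. Then the homology class of each generator of B_i is in the image of the differential, i.e., the inclusion B_i ↪ C induces the zero map on homology. -/
import Mathlib


/-- Zig-zag argument: with homology groups H(A_s) abelian groups and
H(B_s) ≅ ℤ, differential maps v_s : A_s → B_s and h_s : A_s → B_{s+r} with
r > 0, every v_s surjective, every appearing h_s (those with s ≤ -t, t = τ ≤ 0)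
surjective, and h_s = 0 for s > -t, the generator of each B_i is in the image
of the total differential; i.e., the inclusion of B_i induces zero on homology. -/
theorem zigzag_generator_in_image
    (A : ℤ → Type) [∀ s, AddCommGroup (A s)]
    (v : ∀ s : ℤ, A s →+ ℤ) (h : ∀ s : ℤ, A s →+ ℤ)
    (r t : ℤ) (hr : 0 < r) (ht : t ≤ 0)
    (hvsurj : ∀ s : ℤ, Function.Surjective (v s))
    (hhsurj : ∀ s : ℤ, s ≤ -t → Function.Surjective (h s))
    (hhzero : ∀ s : ℤ, -t < s → h s = 0) :
    ∀ i : ℤ, ∃ (a : ∀ s : ℤ, A s) (S : Finset ℤ),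
      (∀ s : ℤ, s ∉ S → a s = 0) ∧
      ∀ j : ℤ, v j (a j) + h (j - r) (a (j - r)) = (if j = i then 1 else 0) := by
  classical
  intro i
  choose w hw using hvsurj
  set N : ℕ := (-t - i + 1).toNat with hNdef
  have hN : -t < i + (N : ℤ) * r := by
    rcases le_or_gt (-t - i + 1) 0 with hc | hc
    · have h0 : N = 0 := by simpa [hNdef] using Int.toNat_of_nonpos hc
      rw [h0]; push_cast; linarith
    · have h1 : (N : ℤ) = -t - i + 1 := by
        rw [hNdef]; exact Int.toNat_of_nonneg hc.le
      nlinarith [Int.natCast_nonneg N]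
  let g : ℕ → Σ s, A s := fun k =>
    Nat.rec ⟨i, w i 1⟩ (fun _ gk => ⟨gk.1 + r, w (gk.1 + r) (- h gk.1 gk.2)⟩) k
  have hg1 : ∀ k : ℕ, (g k).1 = i + (k : ℤ) * r := by
    intro k
    induction k with
    | zero => show i = i + (0 : ℕ) * r; push_cast; ring
    | succ k ih => show (g k).1 + r = i + ((k : ℕ) + 1 : ℤ) * r; rw [ih]; push_cast; ring
  have hinj : ∀ k m : ℕ, (g k).1 = (g m).1 → k = m := by
    intro k m he
    rw [hg1, hg1] at he
    have : (k : ℤ) = m := by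
      have hrne : (r : ℤ) ≠ 0 := hr.ne'
      have := add_left_cancel he
      exact mul_right_cancel₀ hrne this
    exact_mod_cast this
  have hgv0 : v (g 0).1 (g 0).2 = 1 := hw i 1
  have hgvs : ∀ k : ℕ, v (g (k + 1)).1 (g (k + 1)).2 = - h (g k).1 (g k).2 :=
    fun k => hw _ _
  let a : ∀ s : ℤ, A s := fun s =>
    if hs : ∃ k : ℕ, k ≤ N ∧ (g k).1 = s then hs.choose_spec.2 ▸ (g hs.choose).2 else 0
  have ha_out : ∀ s : ℤ, (¬ ∃ k : ℕ, k ≤ N ∧ (g k).1 = s) → a s = 0 := by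
    intro s hs
    simp only [a, dif_neg hs]
  have ha_in : ∀ k : ℕ, k ≤ N → a ((g k).1) = (g k).2 := by
    intro k hk
    have hs : ∃ m : ℕ, m ≤ N ∧ (g m).1 = (g k).1 := ⟨k, hk, rfl⟩
    have hkk : hs.choose = k := hinj _ _ hs.choose_spec.2
    simp only [a, dif_pos hs]
    generalize_proofs pf
    revert pf
    rw [hkk]
    intro pf
    have hpf : pf = rfl := rfl
    rw [hpf]
  refine ⟨a, (Finset.range (N + 1)).image (fun k => (g k).1), ?_, ?_⟩
  · intro s hs
    apply ha_out
    rintro ⟨k, hk, he⟩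
    exact hs (Finset.mem_image.mpr ⟨k, Finset.mem_range.mpr (Nat.lt_succ_of_le hk), he⟩)
  · intro j
    by_cases hj : ∃ k : ℕ, k ≤ N ∧ (g k).1 = j
    · obtain ⟨k, hk, he⟩ := hj
      subst he
      rw [ha_in k hk]
      cases k with
      | zero =>
        have hji : (g 0).1 = i := by rw [hg1]; push_cast; ring
        have h2 : a ((g 0).1 - r) = 0 := by
          apply ha_out
          rintro ⟨m, hm, he⟩
          rw [hg1, hg1] at he
          push_cast at he
          nlinarith [Int.natCast_nonneg m]
        rw [h2, map_zero, hgv0, hji, if_pos rfl]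
        ring
      | succ k =>
        have hkN : k ≤ N := Nat.le_of_succ_le hk
        have hpred : (g (k + 1)).1 - r = (g k).1 := by
          show (g k).1 + r - r = (g k).1; ring
        rw [hpred, ha_in k hkN, hgvs k]
        have hne : (g (k + 1)).1 ≠ i := by
          intro hcon
          rw [hg1 (k + 1)] at hcon
          push_cast at hcon
          nlinarith [Int.natCast_nonneg k]
        rw [if_neg hne]
        ring
    · have h1 : a j = 0 := ha_out j hj
      have hji : j ≠ i := by
        rintro rfl
        exact hj ⟨0, Nat.zero_le _, by rw [hg1]; push_cast; ring⟩
      rw [h1, map_zero, if_neg hji]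
      by_cases hj2 : ∃ k : ℕ, k ≤ N ∧ (g k).1 = j - r
      · obtain ⟨k, hk, he⟩ := hj2
        have hkN : k = N := by
          by_contra hkn
          have hklt : k + 1 ≤ N := Nat.lt_of_le_of_ne hk hkn
          exact hj ⟨k + 1, hklt, by show (g k).1 + r = j; rw [he]; ring⟩
        subst hkN
        rw [← he, ha_in N le_rfl]
        have hz : h (g N).1 = 0 := hhzero _ (by rw [hg1]; exact hN)
        rw [hz]
        simp
      · rw [ha_out _ hj2, map_zero]
        ring
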